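/- An ordered field F satisfies the least upper bound property if and only if it satisfies the Limit of Derivatives Property (if f is continuous at a, differentiable on a punctured neighborhood of a, and lim_{x→a} f'(x) exists, then f'(a) exists and equals lim_{x→a} f'(x)). -/

import Mathlib

/-!
A field with the least upper bound property is isomorphic, as an ordered field, to `ℝ`, and the
limit of derivatives property over `ℝ` follows from the mean value theorem; it transfers along the
isomorphism, which is a homeomorphism for the order topologies.

Conversely, if some nonempty bounded set has no supremum, we build a "staircase" `φ` on `(0, ∞)`
that is locally constant and satisfies `c x ≤ φ x ≤ C x` with `c > 0`. Extended by `0` to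
`(-∞, 0]`, it is continuous at `0` and has derivative `0` everywhere else, yet all its difference
quotients at `0` from the right are at least `c`. If `F` is not archimedean, `φ` picks a
representative of the archimedean class of `x`. If `F` is archimedean, the missing supremum gives
a clopen upper set `U` with `1 ∉ U ≠ ∅`, and `φ x = 2 ^ k` where `k` is the largest integer with
`x / 2 ^ k ∈ U`.
-/

open Filter Topology

/-- The derivative of `f : F → F` at `a` in the order topology. -/
def HasDerivO {F : Type*} [Field F] [LinearOrder F] [IsStrictOrderedRing F] [TopologicalSpace F]
    (f : F → F) (L a : F) : Prop :=
  Tendsto (fun x => (f x - f a) / (x - a)) (𝓝[≠] a) (𝓝 L)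

open Set

def LimitOfDerivativesProperty (F : Type*) [Field F] [LinearOrder F] [IsStrictOrderedRing F]
    [TopologicalSpace F] : Prop :=
  ∀ (f f' : F → F) (a L : F), ContinuousAt f a →
    (∃ U ∈ 𝓝 a, ∀ x ∈ U, x ≠ a → HasDerivO f (f' x) x) →
    Tendsto f' (𝓝[≠] a) (𝓝 L) → HasDerivO f L a

theorem hasDerivO_iff_hasDerivAt {f : ℝ → ℝ} {L a : ℝ} : HasDerivO f L a ↔ HasDerivAt f L a := by
  rw [HasDerivO, hasDerivAt_iff_tendsto_slope, slope_fun_def_field]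

theorem limitOfDerivativesProperty_real : LimitOfDerivativesProperty ℝ := by
  intro f f' a L hf ⟨U, hU, hderiv⟩ hlim
  have hderiv' : ∀ᶠ x in 𝓝[≠] a, HasDerivAt f (f' x) x := by
    filter_upwards [inter_mem_nhdsWithin {a}ᶜ hU, self_mem_nhdsWithin] with x hxU hxa
    exact hasDerivO_iff_hasDerivAt.1 (hderiv x hxU.2 hxa)
  have hlim' : Tendsto (deriv f) (𝓝[≠] a) (𝓝 L) :=
    hlim.congr' (hderiv'.mono fun x hx => hx.deriv.symm)
  have hdiff : DifferentiableOn ℝ f {x | HasDerivAt f (f' x) x} :=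
    fun x hx => hx.differentiableAt.differentiableWithinAt
  have hleft : HasDerivWithinAt f L (Iic a) a :=
    hasDerivWithinAt_Iic_of_tendsto_deriv hdiff hf.continuousWithinAt
      (nhdsLT_le_nhdsNE a hderiv') (hlim'.mono_left (nhdsLT_le_nhdsNE a))
  have hright : HasDerivWithinAt f L (Ici a) a :=
    hasDerivWithinAt_Ici_of_tendsto_deriv hdiff hf.continuousWithinAt
      (nhdsGT_le_nhdsNE a hderiv') (hlim'.mono_left (nhdsGT_le_nhdsNE a))
  simpa [hasDerivO_iff_hasDerivAt] using hleft.union hright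

theorem Homeomorph.tendsto_conj_punctured_iff {X Y : Type*} [TopologicalSpace X]
    [TopologicalSpace Y] (h : X ≃ₜ Y) {u : X → X} {a l : X} :
    Tendsto (h ∘ u ∘ h.symm) (𝓝[≠] (h a)) (𝓝 (h l)) ↔ Tendsto u (𝓝[≠] a) (𝓝 l) := by
  rw [← h.map_punctured_nhds_eq, tendsto_map'_iff, h.isInducing.tendsto_nhds_iff]
  simp [Function.comp_def]

section OrderRingIso

variable {F K : Type*} [Field F] [LinearOrder F] [IsStrictOrderedRing F] [TopologicalSpace F]
  [OrderTopology F] [Field K] [LinearOrder K] [IsStrictOrderedRing K] [TopologicalSpace K]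
  [OrderTopology K]

theorem hasDerivO_conj_orderRingIso_iff (e : F ≃+*o K) {f : F → F} {L a : F} :
    HasDerivO (e ∘ f ∘ e.symm) (e L) (e a) ↔ HasDerivO f L a := by
  have hslope : (fun y => ((e ∘ f ∘ e.symm) y - (e ∘ f ∘ e.symm) (e a)) / (y - e a)) =
      e ∘ (fun x => (f x - f a) / (x - a)) ∘ e.symm := by
    funext y
    obtain ⟨x, rfl⟩ := e.surjective y
    simp [map_div₀, map_sub]
  rw [HasDerivO, hslope]
  exact e.toOrderIso.toHomeomorph.tendsto_conj_punctured_iff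

theorem LimitOfDerivativesProperty.of_orderRingIso (e : F ≃+*o K)
    (hK : LimitOfDerivativesProperty K) : LimitOfDerivativesProperty F := by
  intro f f' a L hf ⟨U, hU, hderiv⟩ hlim
  have he : Continuous e := e.toOrderIso.continuous
  have he_symm : Continuous e.symm := e.symm.toOrderIso.continuous
  rw [← hasDerivO_conj_orderRingIso_iff e]
  refine hK _ (e ∘ f' ∘ e.symm) _ _ ?_ ⟨e.symm ⁻¹' U, ?_, ?_⟩ ?_
  · exact he.continuousAt.comp (hf.comp_of_eq he_symm.continuousAt (e.symm_apply_apply a))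
  · exact he_symm.continuousAt.preimage_mem_nhds (by simpa using hU)
  · intro y hyU hya
    obtain ⟨x, rfl⟩ : ∃ x, e x = y := ⟨e.symm y, e.apply_symm_apply y⟩
    rw [Function.comp_apply, Function.comp_apply, e.symm_apply_apply,
      hasDerivO_conj_orderRingIso_iff]
    rw [mem_preimage, e.symm_apply_apply] at hyU
    exact hderiv x hyU (ne_of_apply_ne e hya)
  · exact e.toOrderIso.toHomeomorph.tendsto_conj_punctured_iff.2 hlim

end OrderRingIso

noncomputable abbrev ConditionallyCompleteLinearOrder.ofExistsIsLUB (α : Type*) [LinearOrder α]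
    [Nonempty α] [NoMaxOrder α] (h : ∀ A : Set α, A.Nonempty → BddAbove A → ∃ s, IsLUB A s) :
    ConditionallyCompleteLinearOrder α :=
  open Classical in
  letI : SupSet α := ⟨fun A =>
    if hA : A.Nonempty ∧ BddAbove A then (h A hA.1 hA.2).choose else Classical.arbitrary α⟩
  have sSup_of_not : ∀ A : Set α, ¬(A.Nonempty ∧ BddAbove A) → sSup A = Classical.arbitrary α :=
    fun _ hA => dif_neg hA
  { conditionallyCompleteLatticeOfLatticeOfsSup α fun A hb hn => by
      rw [show sSup A = _ from dif_pos ⟨hn, hb⟩]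
      exact (h A hn hb).choose_spec,
    ‹LinearOrder α› with
    csSup_of_not_bddAbove := fun A hA => by
      rw [sSup_of_not A (hA ·.2), sSup_of_not ∅ (not_nonempty_empty ·.1)]
    csInf_of_not_bddBelow := fun A hA => by
      show sSup (lowerBounds A) = sSup (lowerBounds ∅)
      rw [sSup_of_not _ (hA ·.1), lowerBounds_empty, sSup_of_not _ (not_bddAbove_univ ·.2)] }

section LeastUpperBound

variable {F : Type*} [Field F] [LinearOrder F] [IsStrictOrderedRing F]

theorem nonempty_orderRingIso_real_of_exists_isLUB
    (h : ∀ A : Set F, A.Nonempty → BddAbove A → ∃ s, IsLUB A s) : Nonempty (F ≃+*o ℝ) :=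
  letI := ConditionallyCompleteLinearOrder.ofExistsIsLUB F h
  ⟨ConditionallyCompleteLinearOrderedField.inducedOrderRingIso F ℝ⟩

theorem limitOfDerivativesProperty_of_exists_isLUB [TopologicalSpace F] [OrderTopology F]
    (h : ∀ A : Set F, A.Nonempty → BddAbove A → ∃ s, IsLUB A s) :
    LimitOfDerivativesProperty F :=
  let ⟨e⟩ := nonempty_orderRingIso_real_of_exists_isLUB h
  limitOfDerivativesProperty_real.of_orderRingIso e

end LeastUpperBound

theorem isClopen_upperBounds_of_forall_not_isLUB {α : Type*} [LinearOrder α] [TopologicalSpace α]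
    [OrderTopology α] {A : Set α} (h : ∀ s, ¬ IsLUB A s) : IsClopen (upperBounds A) := by
  refine ⟨?_, isOpen_iff_mem_nhds.2 fun b hb => ?_⟩
  · have : upperBounds A = ⋂ a ∈ A, Ici a := by ext; simp [upperBounds]
    exact this ▸ isClosed_biInter fun a _ => isClosed_Ici
  · obtain ⟨b', hb', hb'b⟩ : ∃ b' ∈ upperBounds A, b' < b := by
      by_contra! hmin
      exact h b ⟨hb, hmin⟩
    exact mem_of_superset (Ioi_mem_nhds hb'b) fun c hc a ha => (hb' ha).trans hc.le

section Staircase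

variable {F : Type*} [Field F] [LinearOrder F] [IsStrictOrderedRing F]

theorem ArchimedeanClass.mk_eq_mk_of_mem_Ioo {x y : F} (hy : y ∈ Ioo (x / 2) (2 * x)) :
    ArchimedeanClass.mk y = ArchimedeanClass.mk x := by
  have hx : 0 < x := by linarith [hy.1, hy.2]
  have hy0 : 0 < y := by linarith [hy.1]
  refine ArchimedeanClass.mk_eq_mk.2 ⟨⟨2, ?_⟩, ⟨2, ?_⟩⟩ <;>
    simp only [abs_of_pos hx, abs_of_pos hy0, two_nsmul] <;> linarith [hy.1, hy.2]

section DyadicExponent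

variable {U : Set F} {x : F} {k : ℤ}

noncomputable def dyadicExponent (U : Set F) (x : F) : ℤ := sSup {k : ℤ | x / 2 ^ k ∈ U}

theorem isLowerSet_setOf_div_zpow_mem (hU : IsUpperSet U) (hx : 0 < x) :
    IsLowerSet {k : ℤ | x / 2 ^ k ∈ U} := fun _ j hjk hk =>
  hU (div_le_div_of_nonneg_left hx.le (zpow_pos two_pos j)
    (zpow_le_zpow_right₀ one_le_two hjk)) hk

theorem dyadicExponent_eq (hU : IsUpperSet U) (hx : 0 < x) (hk : x / 2 ^ k ∈ U)
    (hk' : x / 2 ^ (k + 1) ∉ U) : dyadicExponent U x = k :=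
  IsGreatest.csSup_eq ⟨hk, fun _ hj => not_lt.1 fun hkj =>
    hk' (isLowerSet_setOf_div_zpow_mem hU hx (Int.add_one_le_iff.2 hkj) hj)⟩

theorem div_zpow_dyadicExponent_mem [Archimedean F] {q : F} (hU : IsUpperSet U) (h1 : 1 ∉ U)
    (hq : q ∈ U) (hx : 0 < x) :
    x / 2 ^ dyadicExponent U x ∈ U ∧ x / 2 ^ (dyadicExponent U x + 1) ∉ U := by
  have hne : {k : ℤ | x / 2 ^ k ∈ U}.Nonempty := by
    obtain ⟨n, hn⟩ := pow_unbounded_of_one_lt (q / x) one_lt_two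
    refine ⟨-n, hU ?_ hq⟩
    rw [zpow_neg, zpow_natCast, div_inv_eq_mul]
    exact ((div_lt_iff₀ hx).1 hn).le.trans_eq (mul_comm _ _)
  have hbdd : BddAbove {k : ℤ | x / 2 ^ k ∈ U} := by
    obtain ⟨n, hn⟩ := pow_unbounded_of_one_lt x one_lt_two
    refine ⟨n, fun k hk => ?_⟩
    have h1k : 1 < x / 2 ^ k := lt_of_not_ge fun h => h1 (hU h hk)
    rw [one_lt_div (zpow_pos two_pos k)] at h1k
    exact ((zpow_lt_zpow_iff_right₀ one_lt_two).1 (h1k.trans (by exact_mod_cast hn))).le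
  exact ⟨Int.csSup_mem hne hbdd, fun h => (lt_add_one _).not_ge (le_csSup hbdd h)⟩

end DyadicExponent

variable [TopologicalSpace F]

theorem hasDerivO_zero_of_eventually_eq {f : F → F} {x : F} (h : ∀ᶠ y in 𝓝 x, f y = f x) :
    HasDerivO f 0 x := by
  refine tendsto_const_nhds.congr' ?_
  filter_upwards [nhdsWithin_le_nhds h] with y hy
  rw [hy, sub_self, zero_div]

variable [OrderTopology F]

theorem not_limitOfDerivativesProperty_of_staircase (φ : F → F) {c C : F} (hc : 0 < c)
    (hlower : ∀ x, 0 < x → c * x ≤ φ x) (hupper : ∀ x, 0 < x → φ x ≤ C * x)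
    (hloc : ∀ x, 0 < x → ∀ᶠ y in 𝓝 x, φ y = φ x) : ¬ LimitOfDerivativesProperty F := by
  intro hldp
  set f := (Ioi 0).indicator φ
  have hf0 : f 0 = 0 := indicator_of_notMem (lt_irrefl 0) φ
  have hcont : ContinuousAt f 0 := by
    have hbound : ∀ x, 0 ≤ f x ∧ f x ≤ C * max x 0 := by
      intro x
      rcases le_or_gt x 0 with hx | hx
      · simp [f, hx]
      · simp only [f, indicator_of_mem (mem_Ioi.2 hx), max_eq_left hx.le]
        exact ⟨(mul_pos hc hx).le.trans (hlower x hx), hupper x hx⟩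
    have hmax : Tendsto (fun x : F => C * max x 0) (𝓝 0) (𝓝 0) := by
      have : Continuous fun x : F => C * max x 0 := by fun_prop
      simpa using this.tendsto 0
    rw [ContinuousAt, hf0]
    exact tendsto_of_tendsto_of_tendsto_of_le_of_le tendsto_const_nhds hmax
      (fun x => (hbound x).1) (fun x => (hbound x).2)
  have hderiv : ∀ x ∈ univ, x ≠ 0 → HasDerivO f 0 x := by
    intro x _ hx
    refine hasDerivO_zero_of_eventually_eq ?_
    rcases hx.lt_or_gt with hx | hx
    · filter_upwards [Iio_mem_nhds hx] with y hy
      simp only [f, indicator_of_notMem (notMem_Ioi.2 hy.le),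
        indicator_of_notMem (notMem_Ioi.2 hx.le)]
    · filter_upwards [Ioi_mem_nhds hx, hloc x hx] with y hy hφ
      simp [f, indicator_of_mem (mem_Ioi.2 hy), indicator_of_mem (mem_Ioi.2 hx), hφ]
  have hslope : HasDerivO f 0 0 :=
    hldp f 0 0 0 hcont ⟨univ, univ_mem, hderiv⟩ tendsto_const_nhds
  have hslope_ge : ∀ᶠ x in 𝓝[>] (0 : F), c ≤ (f x - f 0) / (x - 0) := by
    filter_upwards [self_mem_nhdsWithin] with x hx
    rw [hf0, sub_zero, sub_zero, le_div_iff₀ hx]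
    simpa [f, indicator_of_mem hx] using hlower x hx
  exact hc.not_ge (ge_of_tendsto (hslope.mono_left (nhdsGT_le_nhdsNE 0)) hslope_ge)

theorem not_limitOfDerivativesProperty_of_not_archimedean (h : ¬ Archimedean F) :
    ¬ LimitOfDerivativesProperty F := by
  obtain ⟨M, hM⟩ : ∃ M : F, ∀ n : ℕ, (n : F) ≤ M := by
    simpa [archimedean_iff_nat_lt] using h
  have hM0 : 0 < M := zero_lt_one.trans_le (by simpa using hM 1)
  have hrep : ∀ x : F, 0 < x → x ≤ M * |(ArchimedeanClass.mk x).out| ∧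
      |(ArchimedeanClass.mk x).out| ≤ M * x := by
    intro x hx
    obtain ⟨⟨m, hm⟩, ⟨n, hn⟩⟩ :=
      ArchimedeanClass.mk_eq_mk.1 (ArchimedeanClass.mk_out (ArchimedeanClass.mk x))
    rw [abs_of_pos hx, nsmul_eq_mul] at hm hn
    exact ⟨hm.trans (mul_le_mul_of_nonneg_right (hM m) (abs_nonneg _)),
      hn.trans (mul_le_mul_of_nonneg_right (hM n) hx.le)⟩
  refine not_limitOfDerivativesProperty_of_staircase (fun x => |(ArchimedeanClass.mk x).out|)
    (inv_pos.2 hM0) (fun x hx => ?_) (fun x hx => (hrep x hx).2) (fun x hx => ?_)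
  · rw [inv_mul_le_iff₀ hM0]
    exact (hrep x hx).1
  · filter_upwards [Ioo_mem_nhds (half_lt_self hx) (lt_two_mul_self hx)] with y hy
    rw [ArchimedeanClass.mk_eq_mk_of_mem_Ioo hy]

theorem not_limitOfDerivativesProperty_of_isClopen [Archimedean F] {U : Set F} {q : F}
    (hclopen : IsClopen U) (hup : IsUpperSet U) (h1 : 1 ∉ U) (hq : q ∈ U) :
    ¬ LimitOfDerivativesProperty F := by
  have hq1 : 1 < q := lt_of_not_ge fun h => h1 (hup h hq)
  have h2pos (k : ℤ) : (0 : F) < 2 ^ k := zpow_pos two_pos k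
  refine not_limitOfDerivativesProperty_of_staircase (fun x => (2 : F) ^ dyadicExponent U x)
    (C := 1) (inv_pos.2 (by positivity : (0 : F) < 2 * q)) (fun x hx => ?_) (fun x hx => ?_)
    (fun x hx => ?_) <;> obtain ⟨hmem, hnot⟩ := div_zpow_dyadicExponent_mem hup h1 hq hx
  · have := lt_of_not_ge fun h => hnot (hup h hq)
    rw [div_lt_iff₀ (h2pos _), zpow_add_one₀ two_ne_zero] at this
    rw [inv_mul_le_iff₀ (by positivity)]
    linarith
  · have := lt_of_not_ge fun h => h1 (hup h hmem)
    rw [one_lt_div (h2pos _)] at this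
    linarith
  · set k := dyadicExponent U x
    have hcont (j : ℤ) : Continuous fun y : F => y / 2 ^ j := continuous_id.div_const _
    filter_upwards [Ioi_mem_nhds hx,
      (hcont k).continuousAt.preimage_mem_nhds (hclopen.isOpen.mem_nhds hmem),
      (hcont (k + 1)).continuousAt.preimage_mem_nhds (hclopen.compl.isOpen.mem_nhds hnot)]
      with y hy hyk hyk'
    rw [dyadicExponent_eq hup hy hyk hyk']

theorem exists_isClopen_isUpperSet_of_forall_not_isLUB {A : Set F} (hne : A.Nonempty)
    (hbdd : BddAbove A) (h : ∀ s, ¬ IsLUB A s) :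
    ∃ U : Set F, IsClopen U ∧ IsUpperSet U ∧ 1 ∉ U ∧ U.Nonempty := by
  obtain ⟨a, ha⟩ := hne
  obtain ⟨b, hb⟩ := hbdd
  have hup : IsUpperSet (upperBounds A) := fun _ _ hcd hc _ hx => (hc hx).trans hcd
  refine ⟨(· + (a - 2)) ⁻¹' upperBounds A,
    (isClopen_upperBounds_of_forall_not_isLUB h).preimage (continuous_add_const _),
    hup.preimage add_left_mono, fun h1 => ?_, ⟨b - (a - 2), by simpa using hb⟩⟩
  have := h1 ha
  linarith

end Staircase

/-- an ordered field satisfies the least upper bound property iff it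
satisfies the Limit of Derivatives Property. -/
theorem stmt_15 {F : Type*} [Field F] [LinearOrder F] [IsStrictOrderedRing F] [TopologicalSpace F] [OrderTopology F] :
    (∀ A : Set F, A.Nonempty → BddAbove A → ∃ s, IsLUB A s) ↔
    (∀ (f f' : F → F) (a L : F), ContinuousAt f a →
      (∃ U ∈ 𝓝 a, ∀ x ∈ U, x ≠ a → HasDerivO f (f' x) x) →
      Tendsto f' (𝓝[≠] a) (𝓝 L) → HasDerivO f L a) := by
  refine ⟨limitOfDerivativesProperty_of_exists_isLUB, fun hldp A hne hbdd => ?_⟩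
  by_contra! hno
  by_cases harch : Archimedean F
  · obtain ⟨U, hclopen, hup, h1, q, hq⟩ :=
      exists_isClopen_isUpperSet_of_forall_not_isLUB hne hbdd hno
    exact not_limitOfDerivativesProperty_of_isClopen hclopen hup h1 hq hldp
  · exact not_limitOfDerivativesProperty_of_not_archimedean harch hldp
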